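/- arXiv:2209.11768 — 5 statements merged into one kernel-verified Lean document; each statement's English description precedes it below -/
import Mathlib

section
/- Suppose that for every ε > 0 there exists a constant C > 0 such that for all real x ≥ 2 and all real y, |∑_{n ≤ x} Λ(n) n^{-iy} − x^{1−iy}/(1−iy)| ≤ C · x^{1/2} · (x+|y|)^ε. Then the Riemann Hypothesis is true. -/
/-!
Fix `γ`, put `a n = Λ n * n ^ (-iγ)`, `w = 1 - iγ` and `R t = ∑_{n ≤ t} a n - t ^ w / w`.
Partial summation gives, for `Re s > 1`,
`-ζ'(s + iγ) / ζ(s + iγ) = ∑ a n * n ^ (-s) = s ∫₁^∞ R t * t ^ (-s - 1) dt + s / (w (s - w))`,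
and the bound `R t = O(t ^ (1/2 + ε))` makes the right-hand side `F s` holomorphic on
`Re s > 1/2 + ε`, `s ≠ w`. By the identity theorem `-ζ'(s + iγ) = F s * ζ(s + iγ)` on that
region. At a zero `β` of `ζ(· + iγ)` the derivative would then vanish to at least the same order
as the function, so the zero has infinite order and `ζ(· + iγ)` vanishes on the whole (connected)
region, which reaches `Re s > 1`. As `ε` is arbitrary, `ζ` has no zero with `1/2 < Re s < 1`, and
the functional equation reflects the zeros with `Re s < 1/2`.
-/

open Finset

/-- The Riemann Hypothesis: every zero of the Riemann zeta function with real
part strictly between 0 and 1 has real part 1/2. -/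
def RH : Prop :=
  ∀ s : ℂ, riemannZeta s = 0 → 0 < s.re → s.re < 1 → s.re = 1 / 2

open Complex Set Filter Asymptotics Topology MeasureTheory

lemma isBigO_rpow_atTop_of_le {a b : ℝ} (hab : a ≤ b) :
    (fun t : ℝ ↦ t ^ a) =O[atTop] (fun t ↦ t ^ b) := by
  refine IsBigO.of_bound 1 ?_
  filter_upwards [eventually_ge_atTop 1] with t ht
  rw [one_mul, Real.norm_of_nonneg (by positivity), Real.norm_of_nonneg (by positivity)]
  exact Real.rpow_le_rpow_of_exponent_le ht hab

theorem AnalyticAt.analyticOrderAt_eq_top_of_deriv_eventuallyEq_mul {𝕜 : Type*}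
    [NontriviallyNormedField 𝕜] [CharZero 𝕜] [CompleteSpace 𝕜] {f h : 𝕜 → 𝕜} {x : 𝕜}
    (hf : AnalyticAt 𝕜 f x) (hh : AnalyticAt 𝕜 h x) (hfx : f x = 0)
    (hderiv : deriv f =ᶠ[𝓝 x] h * f) : analyticOrderAt f x = ⊤ := by
  by_contra hfin
  obtain ⟨n, hn⟩ := ENat.ne_top_iff_exists.mp hfin
  obtain ⟨m, rfl⟩ : ∃ m, n = m + 1 :=
    Nat.exists_eq_succ_of_ne_zero (by rintro rfl; exact hf.analyticOrderAt_ne_zero.mpr hfx hn.symm)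
  have horder := analyticOrderAt_deriv_of_pos hf (by rw [← hn]; push_cast; rfl)
  rw [analyticOrderAt_congr hderiv, analyticOrderAt_mul hh hf, ← hn] at horder
  have := le_add_self.trans_eq horder
  norm_cast at this
  omega

lemma exists_isPreconnected_subset_halfPlane_diff_singleton {e x : ℝ} {w : ℂ} (hex : e < x)
    (hxw : x < w.re) :
    ∃ U : Set ℂ, IsOpen U ∧ IsPreconnected U ∧ U ⊆ {z | e < z.re} \ {w} ∧ (x : ℂ) ∈ U ∧
      {z | w.re < z.re} ⊆ U := by
  set L := {z : ℂ | e < z.re} ∩ {z | z.re < w.re}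
  set D := {z : ℂ | e < z.re} ∩ {z | z.im < w.im}
  set R := {z : ℂ | w.re < z.re}
  have hLD : IsPreconnected (L ∪ D) :=
    ((convex_halfSpace_re_gt e).inter (convex_halfSpace_re_lt _)).isPreconnected.union
      ((x : ℂ) + (w.im - 1) * I) (by simp [L]; constructor <;> linarith) (by simp [D]; linarith)
      ((convex_halfSpace_re_gt e).inter (convex_halfSpace_im_lt _)).isPreconnected
  refine ⟨L ∪ D ∪ R, ?_, ?_, ?_, Or.inl (Or.inl ⟨by simpa using hex, by simpa using hxw⟩),
    subset_union_right⟩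
  · exact (((isOpen_lt continuous_const continuous_re).inter
      (isOpen_lt continuous_re continuous_const)).union
      ((isOpen_lt continuous_const continuous_re).inter
        (isOpen_lt continuous_im continuous_const))).union
      (isOpen_lt continuous_const continuous_re)
  · exact hLD.union ((w.re + 1 : ℝ) + (w.im - 1) * I) (Or.inr ⟨by simp; linarith, by simp⟩)
      (by simp [R]) (convex_halfSpace_re_gt _).isPreconnected
  · rintro z ((⟨hze, hzw⟩ | ⟨hze, hzw⟩) | hzw)
    · exact ⟨hze, by rintro rfl; exact lt_irrefl z.re hzw⟩
    · exact ⟨hze, by rintro rfl; exact lt_irrefl z.im hzw⟩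
    · exact ⟨(hex.trans hxw).trans hzw, by rintro rfl; exact lt_irrefl z.re hzw⟩

noncomputable def sumRemainder (a : ℕ → ℂ) (w : ℂ) (t : ℝ) : ℂ :=
  (∑ k ∈ Finset.Icc 1 ⌊t⌋₊, a k) - (t : ℂ) ^ w / w

noncomputable def remainderMellin (a : ℕ → ℂ) (w z : ℂ) : ℂ :=
  mellin ((Set.Ici 1).indicator (sumRemainder a w)) (-z)

section sumRemainder

variable {a : ℕ → ℂ} {w : ℂ} {C e : ℝ}

lemma measurable_sumRemainder : Measurable (sumRemainder a w) := by
  unfold sumRemainder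
  fun_prop

lemma remainderMellin_eq_integral (z : ℂ) :
    remainderMellin a w z = ∫ t in Set.Ioi (1 : ℝ), (t : ℂ) ^ (-z - 1) * sumRemainder a w t := by
  have (t : ℝ) : (t : ℂ) ^ (-z - 1) • (Set.Ici 1).indicator (sumRemainder a w) t =
      (Set.Ici 1).indicator (fun t : ℝ ↦ (t : ℂ) ^ (-z - 1) * sumRemainder a w t) t := by
    simp only [indicator_apply, smul_eq_mul, mul_ite, mul_zero]
  rw [remainderMellin, mellin]
  simp_rw [this]
  rw [integral_indicator measurableSet_Ici, Measure.restrict_restrict measurableSet_Ici,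
    inter_eq_self_of_subset_left (Set.Ici_subset_Ioi.mpr one_pos), integral_Ici_eq_integral_Ioi]

lemma isBigO_indicator_sumRemainder_nhdsGT (b : ℝ) :
    (Set.Ici 1).indicator (sumRemainder a w) =O[𝓝[>] 0] (· ^ b) := by
  refine (isBigO_zero _ _).congr' ?_ .rfl
  filter_upwards [Ioo_mem_nhdsGT one_pos] with t ht
  exact (indicator_of_notMem (Set.notMem_Ici.mpr ht.2) _).symm

lemma isBigO_sumRemainder (hR : ∀ t ≥ 1, ‖sumRemainder a w t‖ ≤ C * t ^ e) :
    sumRemainder a w =O[atTop] (· ^ e) := by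
  refine IsBigO.of_bound C ?_
  filter_upwards [eventually_ge_atTop 1] with t ht
  rw [Real.norm_of_nonneg (by positivity)]
  exact hR t ht

lemma isBigO_indicator_sumRemainder (hR : ∀ t ≥ 1, ‖sumRemainder a w t‖ ≤ C * t ^ e) :
    (Set.Ici 1).indicator (sumRemainder a w) =O[atTop] (· ^ e) := by
  refine (isBigO_sumRemainder hR).congr' ?_ .rfl
  filter_upwards [eventually_ge_atTop 1] with t ht
  exact (indicator_of_mem (Set.mem_Ici.mpr ht) _).symm

lemma locallyIntegrableOn_indicator_sumRemainder
    (hR : ∀ t ≥ 1, ‖sumRemainder a w t‖ ≤ C * t ^ e) :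
    LocallyIntegrableOn ((Set.Ici 1).indicator (sumRemainder a w)) (Set.Ioi 0) := by
  have hbound (t : ℝ) : ‖(Set.Ici 1).indicator (sumRemainder a w) t‖ ≤ ‖C * t ^ e‖ := by
    by_cases ht : 1 ≤ t
    · rw [indicator_of_mem (Set.mem_Ici.mpr ht)]
      exact (hR t ht).trans (Real.le_norm_self _)
    · rw [indicator_of_notMem (Set.notMem_Ici.mpr (not_le.mp ht)), norm_zero]
      positivity
  have hcont : ContinuousOn (fun t : ℝ ↦ C * t ^ e) (Set.Ioi 0) :=
    continuousOn_const.mul (continuousOn_id.rpow_const fun t ht ↦ Or.inl (ne_of_gt ht))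
  exact (hcont.locallyIntegrableOn measurableSet_Ioi).mono
    (measurable_sumRemainder.indicator measurableSet_Ici).aestronglyMeasurable (.of_forall hbound)

lemma differentiableAt_remainderMellin (hR : ∀ t ≥ 1, ‖sumRemainder a w t‖ ≤ C * t ^ e)
    {z : ℂ} (hz : e < z.re) : DifferentiableAt ℂ (remainderMellin a w) z :=
  (mellin_differentiableAt_of_isBigO_rpow (a := -e) (b := -z.re - 1)
    (locallyIntegrableOn_indicator_sumRemainder hR)
    (by simpa using isBigO_indicator_sumRemainder hR) (by simpa using hz)
    (isBigO_indicator_sumRemainder_nhdsGT _) (by simp)).comp z differentiableAt_id.neg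

lemma integrableOn_cpow_mul_sumRemainder (hR : ∀ t ≥ 1, ‖sumRemainder a w t‖ ≤ C * t ^ e)
    {s : ℂ} (hs : e < s.re) :
    IntegrableOn (fun t : ℝ ↦ (t : ℂ) ^ (-s - 1) * sumRemainder a w t) (Set.Ioi 1) := by
  have hconv : MellinConvergent ((Set.Ici 1).indicator (sumRemainder a w)) (-s) :=
    mellinConvergent_of_isBigO_rpow (a := -e) (b := -s.re - 1)
      (locallyIntegrableOn_indicator_sumRemainder hR)
      (by simpa using isBigO_indicator_sumRemainder hR) (by simpa using hs)
      (isBigO_indicator_sumRemainder_nhdsGT _) (by simp)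
  refine (hconv.mono_set (Set.Ioi_subset_Ioi zero_le_one)).congr_fun (fun t ht ↦ ?_)
    measurableSet_Ioi
  simp only [smul_eq_mul, indicator_of_mem (Set.mem_Ici.mpr (Set.mem_Ioi.mp ht).le)]

lemma isBigO_partialSum (hR : ∀ t ≥ 1, ‖sumRemainder a w t‖ ≤ C * t ^ e) :
    (fun n : ℕ ↦ ∑ k ∈ Finset.Icc 1 n, a k) =O[atTop] (fun n : ℕ ↦ (n : ℝ) ^ max e w.re) := by
  have hmain : (fun t : ℝ ↦ (t : ℂ) ^ w / w) =O[atTop] (· ^ w.re) := by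
    refine IsBigO.of_bound ‖w‖⁻¹ ?_
    filter_upwards [eventually_gt_atTop 0] with t ht
    rw [norm_div, norm_cpow_eq_rpow_re_of_pos ht, Real.norm_of_nonneg (by positivity),
      div_eq_inv_mul]
  have hsum : (fun t : ℝ ↦ ∑ k ∈ Finset.Icc 1 ⌊t⌋₊, a k) =O[atTop] (· ^ max e w.re) :=
    (((isBigO_sumRemainder hR).trans (isBigO_rpow_atTop_of_le (le_max_left _ _))).add
      (hmain.trans (isBigO_rpow_atTop_of_le (le_max_right _ _)))).congr_left
      fun t ↦ sub_add_cancel _ _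
  simpa [Function.comp_def] using hsum.comp_tendsto tendsto_natCast_atTop_atTop

theorem LSeries_eq_remainderMellin (hR : ∀ t ≥ 1, ‖sumRemainder a w t‖ ≤ C * t ^ e) (hw : w ≠ 0)
    (he : 0 ≤ e) {s : ℂ} (hes : e < s.re) (hws : w.re < s.re) (hS : LSeriesSummable a s) :
    LSeries a s = s * remainderMellin a w s + s / (w * (s - w)) := by
  have hsw : s - w ≠ 0 := sub_ne_zero.mpr fun h ↦ hws.ne (by rw [h])
  have hws' : w - s ≠ 0 := sub_ne_zero.mpr fun h ↦ hws.ne (by rw [h])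
  have hpoint : ∀ t ∈ Set.Ioi (1 : ℝ), (∑ k ∈ Finset.Icc 1 ⌊t⌋₊, a k) * (t : ℂ) ^ (-(s + 1)) =
      (t : ℂ) ^ (-s - 1) * sumRemainder a w t + w⁻¹ * (t : ℂ) ^ (w - s - 1) := by
    intro t ht
    have ht0 : (t : ℂ) ≠ 0 := ofReal_ne_zero.mpr (by linarith [mem_Ioi.mp ht])
    have hsplit : (t : ℂ) ^ (w - s - 1) = (t : ℂ) ^ w * (t : ℂ) ^ (-s - 1) := by
      rw [← cpow_add _ _ ht0]; ring_nf
    rw [hsplit, neg_add', sumRemainder]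
    field_simp
    ring
  have hpow : IntegrableOn (fun t : ℝ ↦ (t : ℂ) ^ (w - s - 1)) (Set.Ioi 1) :=
    integrableOn_Ioi_cpow_of_lt (by simp; linarith) one_pos
  rw [LSeries_eq_mul_integral a (le_max_of_le_left he) (max_lt hes hws) hS (isBigO_partialSum hR),
    setIntegral_congr_fun measurableSet_Ioi hpoint,
    integral_add (integrableOn_cpow_mul_sumRemainder hR hes) (hpow.const_mul _),
    integral_const_mul, integral_Ioi_cpow_of_lt (by simp; linarith) one_pos,
    ← remainderMellin_eq_integral, ofReal_one, one_cpow, sub_add_cancel]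
  field_simp
  ring

lemma differentiableAt_mul_remainderMellin_add
    (hR : ∀ t ≥ 1, ‖sumRemainder a w t‖ ≤ C * t ^ e) (hw : w ≠ 0) {z : ℂ} (hz : e < z.re)
    (hzw : z ≠ w) :
    DifferentiableAt ℂ (fun z ↦ z * remainderMellin a w z + z / (w * (z - w))) z :=
  (differentiableAt_id.mul (differentiableAt_remainderMellin hR hz)).add
    (differentiableAt_id.div ((differentiableAt_const _).mul (differentiableAt_id.sub_const _))
      (mul_ne_zero hw (sub_ne_zero.mpr hzw)))

end sumRemainder

lemma LSeries.term_mul_cpow_neg (f : ℕ → ℂ) (s t : ℂ) :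
    LSeries.term (fun n ↦ f n * (n : ℂ) ^ (-t)) s = LSeries.term f (s + t) := by
  ext n
  rcases eq_or_ne n 0 with rfl | hn
  · simp
  · have hn' : (n : ℂ) ≠ 0 := Nat.cast_ne_zero.mpr hn
    rw [LSeries.term_of_ne_zero hn, LSeries.term_of_ne_zero hn, cpow_add _ _ hn', cpow_neg]
    field_simp

lemma LSeries_mul_cpow_neg (f : ℕ → ℂ) (s t : ℂ) :
    LSeries (fun n ↦ f n * (n : ℂ) ^ (-t)) s = LSeries f (s + t) := by
  rw [LSeries, LSeries, LSeries.term_mul_cpow_neg]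

lemma LSeriesSummable_mul_cpow_neg {f : ℕ → ℂ} {s t : ℂ} :
    LSeriesSummable (fun n ↦ f n * (n : ℂ) ^ (-t)) s ↔ LSeriesSummable f (s + t) := by
  rw [LSeriesSummable, LSeriesSummable, LSeries.term_mul_cpow_neg]

noncomputable def twistedVonMangoldt (γ : ℝ) (n : ℕ) : ℂ :=
  (ArithmeticFunction.vonMangoldt n : ℂ) * (n : ℂ) ^ (-(γ : ℂ) * I)

lemma twistedVonMangoldt_eq (γ : ℝ) :
    twistedVonMangoldt γ =
      fun n ↦ (ArithmeticFunction.vonMangoldt n : ℂ) * (n : ℂ) ^ (-(γ * I)) := by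
  ext n
  rw [twistedVonMangoldt, neg_mul]

lemma LSeries_twistedVonMangoldt {γ : ℝ} {s : ℂ} (hs : 1 < s.re) :
    LSeries (twistedVonMangoldt γ) s =
      -deriv riemannZeta (s + γ * I) / riemannZeta (s + γ * I) := by
  rw [twistedVonMangoldt_eq, LSeries_mul_cpow_neg,
    ArithmeticFunction.LSeries_vonMangoldt_eq_deriv_riemannZeta_div (by simpa)]

lemma LSeriesSummable_twistedVonMangoldt {γ : ℝ} {s : ℂ} (hs : 1 < s.re) :
    LSeriesSummable (twistedVonMangoldt γ) s := by
  rw [twistedVonMangoldt_eq]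
  exact LSeriesSummable_mul_cpow_neg.mpr
    (ArithmeticFunction.LSeriesSummable_vonMangoldt (by simpa))

lemma neg_deriv_riemannZeta_eq {γ C e : ℝ} (he : 0 ≤ e)
    (hR : ∀ t ≥ 1, ‖sumRemainder (twistedVonMangoldt γ) (1 - γ * I) t‖ ≤ C * t ^ e)
    {z : ℂ} (hez : e < z.re) (hz : 1 < z.re) :
    -deriv riemannZeta (z + γ * I) =
      (z * remainderMellin (twistedVonMangoldt γ) (1 - γ * I) z +
        z / ((1 - γ * I) * (z - (1 - γ * I)))) * riemannZeta (z + γ * I) := by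
  have hζ : riemannZeta (z + γ * I) ≠ 0 := riemannZeta_ne_zero_of_one_le_re (by simp; linarith)
  rw [← LSeries_eq_remainderMellin hR (by simp [Complex.ext_iff]) he hez (by simpa)
    (LSeriesSummable_twistedVonMangoldt hz), LSeries_twistedVonMangoldt hz, div_mul_cancel₀ _ hζ]

theorem riemannZeta_ne_zero_of_norm_sumRemainder_le {γ C e β : ℝ} (he : 0 ≤ e)
    (hR : ∀ t ≥ 1, ‖sumRemainder (twistedVonMangoldt γ) (1 - γ * I) t‖ ≤ C * t ^ e)
    (heβ : e < β) (hβ : β < 1) : riemannZeta (β + γ * I) ≠ 0 := by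
  set w : ℂ := 1 - γ * I with hw
  set F : ℂ → ℂ := fun z ↦ z * remainderMellin (twistedVonMangoldt γ) w z + z / (w * (z - w))
  set Z : ℂ → ℂ := fun z ↦ riemannZeta (z + γ * I)
  obtain ⟨U, hUo, hUc, hUsub, hβU, hU⟩ :=
    exists_isPreconnected_subset_halfPlane_diff_singleton (w := w) heβ (by simpa [w] using hβ)
  have hshift : ∀ z ∈ U, z + γ * I ≠ 1 := fun z hz h ↦
    (hUsub hz).2 (by rw [mem_singleton_iff, hw]; linear_combination h)
  have hζ : AnalyticOnNhd ℂ riemannZeta {1}ᶜ :=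
    differentiableOn_riemannZeta.analyticOnNhd isOpen_compl_singleton
  have hZ : AnalyticOnNhd ℂ Z U := fun z hz ↦
    (hζ _ (hshift z hz)).comp (f := fun u ↦ u + γ * I) (by fun_prop)
  have hZ' : AnalyticOnNhd ℂ (fun z ↦ -deriv riemannZeta (z + γ * I)) U := fun z hz ↦
    ((hζ.deriv _ (hshift z hz)).comp (f := fun u ↦ u + γ * I) (by fun_prop)).neg
  have hF : AnalyticOnNhd ℂ F U := by
    refine DifferentiableOn.analyticOnNhd (fun z hz ↦ ?_) hUo
    exact (differentiableAt_mul_remainderMellin_add hR (by simp [w, Complex.ext_iff])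
      (hUsub hz).1 (hUsub hz).2).differentiableWithinAt
  have h2U : (2 : ℂ) ∈ U := hU (by simp [w])
  have heq : EqOn (fun z ↦ -deriv riemannZeta (z + γ * I)) (F * Z) U := by
    refine hZ'.eqOn_of_preconnected_of_eventuallyEq (hF.mul hZ) hUc h2U ?_
    filter_upwards [(isOpen_lt continuous_const continuous_re).mem_nhds
      (show (1 : ℝ) < (2 : ℂ).re by simp)] with z hz
    exact neg_deriv_riemannZeta_eq he hR (by linarith) hz
  have hderiv : deriv Z =ᶠ[𝓝 (β : ℂ)] (-F) * Z := by
    filter_upwards [hUo.mem_nhds hβU] with z hz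
    simp only [Z, deriv_comp_add_const, Pi.mul_apply, Pi.neg_apply, neg_mul]
    exact neg_eq_iff_eq_neg.mp (heq hz)
  intro hzero
  have htop :=
    (hZ _ hβU).analyticOrderAt_eq_top_of_deriv_eventuallyEq_mul (hF _ hβU).neg hzero hderiv
  exact riemannZeta_ne_zero_of_one_le_re (by simp : 1 ≤ (2 + γ * I).re)
    (hZ.eqOn_zero_of_preconnected_of_eventuallyEq_zero hUc hβU (analyticOrderAt_eq_top.mp htop)
      h2U)

lemma norm_sumRemainder_twistedVonMangoldt_le {γ ε C : ℝ} (hε : 0 < ε) (hC : 0 ≤ C)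
    (hbound : ∀ x ≥ 2, ‖sumRemainder (twistedVonMangoldt γ) (1 - γ * I) x‖ ≤
      C * √x * (x + |γ|) ^ ε) {x : ℝ} (hx : 1 ≤ x) :
    ‖sumRemainder (twistedVonMangoldt γ) (1 - γ * I) x‖ ≤
      (C * (1 + |γ|) ^ ε + 2) * x ^ (1 / 2 + ε) := by
  have hx0 : 0 < x := by linarith
  have hpow : 1 ≤ x ^ (1 / 2 + ε) := Real.one_le_rpow hx (by positivity)
  rcases le_or_gt 2 x with h2 | h2
  · have hshift : (x + |γ|) ^ ε ≤ x ^ ε * (1 + |γ|) ^ ε := by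
      rw [← Real.mul_rpow hx0.le (by positivity)]
      exact Real.rpow_le_rpow (by positivity) (by nlinarith [abs_nonneg γ]) hε.le
    calc _ ≤ C * √x * (x + |γ|) ^ ε := hbound x h2
      _ ≤ C * √x * (x ^ ε * (1 + |γ|) ^ ε) := by gcongr
      _ = C * (1 + |γ|) ^ ε * x ^ (1 / 2 + ε) := by
        rw [Real.sqrt_eq_rpow, Real.rpow_add hx0]; ring
      _ ≤ _ := by nlinarith
  · have hfloor : ⌊x⌋₊ = 1 :=
      (Nat.floor_eq_iff hx0.le).mpr ⟨by simpa using hx, by norm_num; linarith⟩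
    have hw : 1 ≤ ‖1 - (γ : ℂ) * I‖ := by
      simpa using Complex.abs_re_le_norm (1 - (γ : ℂ) * I)
    calc _ = x / ‖1 - (γ : ℂ) * I‖ := by
          simp [sumRemainder, hfloor, twistedVonMangoldt, norm_cpow_eq_rpow_re_of_pos hx0]
      _ ≤ x := div_le_self hx0.le hw
      _ ≤ _ := by nlinarith [(by positivity : 0 ≤ C * (1 + |γ|) ^ ε)]

lemma riemannZeta_one_sub_eq_zero {s : ℂ} (hs : riemannZeta s = 0) (hs0 : 0 < s.re)
    (hs1 : s.re < 1) : riemannZeta (1 - s) = 0 := by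
  have hnat (n : ℕ) : s ≠ -n := fun h ↦ by
    have := congrArg re h
    simp at this
    linarith [(n.cast_nonneg : (0 : ℝ) ≤ n)]
  rw [riemannZeta_one_sub hnat (fun h ↦ by simp [h] at hs1), hs, mul_zero]

lemma RH_of_riemannZeta_ne_zero (h : ∀ s : ℂ, 1 / 2 < s.re → s.re < 1 → riemannZeta s ≠ 0) :
    RH := by
  intro s hs hs0 hs1
  rcases lt_trichotomy s.re (1 / 2) with hlt | heq | hgt
  · exact (h (1 - s) (by simp; linarith) (by simp; linarith)
      (riemannZeta_one_sub_eq_zero hs hs0 hs1)).elim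
  · exact heq
  · exact (h s hgt hs1 hs).elim

theorem stmt_4
    (h : ∀ ε : ℝ, 0 < ε → ∃ C > 0, ∀ x y : ℝ, 2 ≤ x →
      ‖(∑ n ∈ Finset.Icc 1 ⌊x⌋₊,
            (ArithmeticFunction.vonMangoldt n : ℂ) * (n : ℂ) ^ (-(y : ℂ) * Complex.I)) -
          (x : ℂ) ^ (1 - (y : ℂ) * Complex.I) / (1 - (y : ℂ) * Complex.I)‖ ≤
        C * Real.sqrt x * (x + |y|) ^ ε) :
    RH := by
  refine RH_of_riemannZeta_ne_zero fun s hs hs1 ↦ ?_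
  have hε : 0 < (s.re - 1 / 2) / 2 := by linarith
  obtain ⟨C, hC, hbound⟩ := h _ hε
  have hR (x : ℝ) (hx : 1 ≤ x) :=
    norm_sumRemainder_twistedVonMangoldt_le hε hC.le (fun x ↦ hbound x s.im) hx
  simpa using riemannZeta_ne_zero_of_norm_sumRemainder_le (by positivity) hR (by linarith) hs1
end

section
/- For every positive integer m, every real y, and every complex s with Re s > 2, one has ∫_1^∞ ( −∑_{j=0}^{m−1} x^{1−iy} (log x)^{m−1−j} / ((m−1−j)! · (iy−1)^{j+1}) ) · x^{−s} dx = (1/(s−1)) · ( 1/(s−2+iy)^m − 1/(iy−1)^m ), where x ranges over real numbers and x^{1−iy}, x^{−s} denote complex powers of the positive real x. -/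
/-!
With `w = iy - 1` and `z = s - 2 + iy` the integrand is
`-∑ⱼ x ^ (-z - 1) (log x) ^ (m - 1 - j) / ((m - 1 - j)! w ^ (j + 1))`, and integrating by parts
`n` times gives the Mellin-type moment `∫₁^∞ x ^ (-z - 1) (log x) ^ n dx = n! / z ^ (n + 1)`
(`Re z > 0`). The factorials cancel, leaving the finite geometric sum
`-∑_{j < m} 1 / (w ^ (j + 1) z ^ (m - j)) = (z ^ (-m) - w ^ (-m)) / (z - w)` with `z - w = s - 1`.
-/

open Nat Finset MeasureTheory Filter Asymptotics Set Real Topology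

lemma isBigO_cpow_mul_log_pow_atTop (c : ℂ) (n : ℕ) {ε : ℝ} (hε : 0 < ε) :
    (fun x : ℝ ↦ (x : ℂ) ^ c * (log x : ℂ) ^ n) =O[atTop] fun x ↦ x ^ (c.re + ε) := by
  have hcpow : (fun x : ℝ ↦ (x : ℂ) ^ c) =O[atTop] fun x ↦ x ^ c.re := by
    refine .of_norm_eventuallyLE ?_
    filter_upwards [eventually_gt_atTop 0] with x hx
    rw [Complex.norm_cpow_eq_rpow_re_of_pos hx]
  have hlog : (fun x : ℝ ↦ (log x : ℂ) ^ n) =O[atTop] fun x ↦ x ^ ε := by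
    refine IsBigO.trans (.of_norm_eventuallyLE ?_) (isLittleO_log_rpow_rpow_atTop n hε).isBigO
    filter_upwards [eventually_ge_atTop 1] with x hx
    simp [abs_of_nonneg (log_nonneg hx)]
  refine (hcpow.mul hlog).congr' .rfl ?_
  filter_upwards [eventually_gt_atTop 0] with x hx
  rw [rpow_add hx]

lemma tendsto_cpow_mul_log_pow_atTop_zero {c : ℂ} (hc : c.re < 0) (n : ℕ) :
    Tendsto (fun x : ℝ ↦ (x : ℂ) ^ c * (log x : ℂ) ^ n) atTop (𝓝 0) := by
  refine (isBigO_cpow_mul_log_pow_atTop c n (ε := -c.re / 2) (by linarith)).trans_tendsto ?_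
  exact tendsto_rpow_neg_atTop (y := -(c.re + -c.re / 2)) (by linarith) |>.congr fun x ↦ by simp

lemma integrableOn_Ioi_one_cpow_mul_log_pow {a : ℂ} (ha : a.re < -1) (n : ℕ) :
    IntegrableOn (fun x : ℝ ↦ (x : ℂ) ^ a * (log x : ℂ) ^ n) (Ioi 1) := by
  have hcont : ContinuousOn (fun x : ℝ ↦ (x : ℂ) ^ a * (log x : ℂ) ^ n) (Ici 1) := by
    intro x hx
    have hx0 : x ≠ 0 := (zero_lt_one.trans_le hx).ne'
    refine ContinuousAt.continuousWithinAt ?_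
    exact (Complex.continuousAt_ofReal_cpow_const _ _ (.inr hx0)).mul
      ((Complex.continuous_ofReal.continuousAt.comp (continuousAt_log hx0)).pow n)
  refine IntegrableOn.mono_set ?_ Ioi_subset_Ici_self
  refine (hcont.locallyIntegrableOn measurableSet_Ici).integrableOn_of_isBigO_atTop
    (isBigO_cpow_mul_log_pow_atTop a n (ε := (-1 - a.re) / 2) (by linarith))
    ⟨Ioi 1, Ioi_mem_atTop 1, integrableOn_Ioi_rpow_of_lt (by linarith) one_pos⟩

lemma hasDerivAt_cpow_mul_log_pow {x : ℝ} (hx : 0 < x) {c : ℂ} (hc : c ≠ 0) (n : ℕ) :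
    HasDerivAt (fun y : ℝ ↦ (y : ℂ) ^ c * (log y : ℂ) ^ (n + 1))
      (c * ((x : ℂ) ^ (c - 1) * (log x : ℂ) ^ (n + 1))
        + (n + 1) * ((x : ℂ) ^ (c - 1) * (log x : ℂ) ^ n)) x := by
  have hlog : HasDerivAt (fun y : ℝ ↦ (log y : ℂ) ^ (n + 1))
      ((n + 1) * (log x : ℂ) ^ n * (x : ℂ)⁻¹) x := by
    simpa using ((hasDerivAt_log hx.ne').pow (n + 1)).ofReal_comp
  refine ((hasDerivAt_ofReal_cpow_const hx.ne' hc).mul hlog).congr_deriv ?_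
  have hxc : (x : ℂ) ≠ 0 := by exact_mod_cast hx.ne'
  rw [Complex.cpow_sub _ _ hxc, Complex.cpow_one]
  field_simp

/-- Integration by parts against `d(x ^ (-b) (log x) ^ (n + 1))`, whose boundary terms vanish. -/
lemma integral_Ioi_one_cpow_neg_sub_one_mul_log_pow_succ {b : ℂ} (hb : 0 < b.re) (n : ℕ) :
    ∫ x in Ioi (1 : ℝ), (x : ℂ) ^ (-b - 1) * (log x : ℂ) ^ (n + 1)
      = (n + 1) / b * ∫ x in Ioi (1 : ℝ), (x : ℂ) ^ (-b - 1) * (log x : ℂ) ^ n := by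
  have hb0 : b ≠ 0 := fun h ↦ by simp [h] at hb
  have hint (k : ℕ) : IntegrableOn (fun x : ℝ ↦ (x : ℂ) ^ (-b - 1) * (log x : ℂ) ^ k) (Ioi 1) :=
    integrableOn_Ioi_one_cpow_mul_log_pow (by simp; linarith) k
  have hparts := integral_Ioi_of_hasDerivAt_of_tendsto'
    (fun x hx ↦ hasDerivAt_cpow_mul_log_pow (zero_lt_one.trans_le hx) (neg_ne_zero.mpr hb0) n)
    (((hint (n + 1)).const_mul _).add ((hint n).const_mul _))
    (tendsto_cpow_mul_log_pow_atTop_zero (c := -b) (by simpa using hb) (n + 1))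
  rw [integral_add ((hint (n + 1)).const_mul _) ((hint n).const_mul _), integral_const_mul,
    integral_const_mul] at hparts
  rw [log_one, Complex.ofReal_zero, zero_pow (succ_ne_zero n), mul_zero, sub_zero] at hparts
  field_simp
  linear_combination -hparts

lemma integral_Ioi_one_cpow_neg_sub_one_mul_log_pow {b : ℂ} (hb : 0 < b.re) (n : ℕ) :
    ∫ x in Ioi (1 : ℝ), (x : ℂ) ^ (-b - 1) * (log x : ℂ) ^ n = n ! / b ^ (n + 1) := by
  induction n with
  | zero =>
    have hre : (-b - 1).re < -1 := by simp; linarith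
    simp [integral_Ioi_cpow_of_lt hre one_pos]
  | succ n ih =>
    rw [integral_Ioi_one_cpow_neg_sub_one_mul_log_pow_succ hb n, ih, factorial_succ,
      pow_succ' _ (n + 1), _root_.div_mul_div_comm]
    push_cast
    ring

lemma sum_range_one_div_pow_mul_pow {K : Type*} [Field K] {w z : K} (hw : w ≠ 0) (hz : z ≠ 0)
    (hwz : w ≠ z) (m : ℕ) :
    ∑ j ∈ range m, 1 / (w ^ (j + 1) * z ^ (m - j)) = (1 / w ^ m - 1 / z ^ m) / (z - w) := by
  rw [eq_div_iff (sub_ne_zero.mpr hwz.symm)]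
  induction m with
  | zero => simp
  | succ m ih =>
    have hshift : ∑ j ∈ range m, 1 / (w ^ (j + 1 + 1) * z ^ (m + 1 - (j + 1)))
        = (∑ j ∈ range m, 1 / (w ^ (j + 1) * z ^ (m - j))) / w := by
      rw [sum_div]
      refine sum_congr rfl fun j _ ↦ ?_
      rw [Nat.add_sub_add_right, pow_succ _ (j + 1)]
      field_simp
    rw [sum_range_succ', hshift, add_mul, div_mul_eq_mul_div, ih, Nat.sub_zero]
    field_simp
    ring

theorem stmt_12_general (m : ℕ) (y : ℝ) (s : ℂ) (hs : 2 < s.re) :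
    ∫ x in Set.Ioi (1 : ℝ),
        (-∑ j ∈ Finset.range m,
            (x : ℂ) ^ (1 - (y : ℂ) * Complex.I) * (Real.log x : ℂ) ^ (m - 1 - j) /
              ((Nat.factorial (m - 1 - j) : ℂ) * ((y : ℂ) * Complex.I - 1) ^ (j + 1))) *
          (x : ℂ) ^ (-s) =
      1 / (s - 1) *
        (1 / (s - 2 + (y : ℂ) * Complex.I) ^ m - 1 / ((y : ℂ) * Complex.I - 1) ^ m) := by
  set w : ℂ := y * Complex.I - 1
  set z : ℂ := s - 2 + y * Complex.I
  have hz : 0 < z.re := by simp [z]; linarith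
  have hw : w ≠ 0 := fun h ↦ by simpa [w] using congrArg Complex.re h
  have hwz : w ≠ z := fun h ↦ by
    have := congrArg Complex.re h
    simp [w, z] at this
    linarith
  have hsz : s - 1 = z - w := by simp only [z, w]; ring
  have hexp {x : ℝ} (hx : 0 < x) :
      (x : ℂ) ^ (1 - y * Complex.I) * (x : ℂ) ^ (-s) = (x : ℂ) ^ (-z - 1) := by
    rw [← Complex.cpow_add _ _ (mod_cast hx.ne')]
    congr 1
    simp only [z]
    ring
  calc _ = ∫ x in Ioi (1 : ℝ), -∑ j ∈ range m,
          (x : ℂ) ^ (-z - 1) * (log x : ℂ) ^ (m - 1 - j) / ((m - 1 - j)! * w ^ (j + 1)) := by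
        refine setIntegral_congr_fun measurableSet_Ioi fun x hx ↦ ?_
        rw [← hexp (zero_lt_one.trans hx), neg_mul, sum_mul]
        congr! 2 with j
        ring
    _ = -∑ j ∈ range m, 1 / (w ^ (j + 1) * z ^ (m - j)) := by
        rw [integral_neg, integral_finsetSum _ fun j _ ↦
          (integrableOn_Ioi_one_cpow_mul_log_pow (by simp; linarith) _).div_const _]
        refine congrArg _ (sum_congr rfl fun j hj ↦ ?_)
        have hfac : ((m - 1 - j)! : ℂ) ≠ 0 := mod_cast factorial_ne_zero _
        rw [integral_div, integral_Ioi_one_cpow_neg_sub_one_mul_log_pow hz,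
          show m - 1 - j + 1 = m - j by grind]
        field_simp
    _ = _ := by
        rw [sum_range_one_div_pow_mul_pow hw (fun h ↦ by simp [h] at hz) hwz, hsz]
        ring

theorem stmt_12 (m : ℕ) (hm : 0 < m) (y : ℝ) (s : ℂ) (hs : 2 < s.re) :
    ∫ x in Set.Ioi (1 : ℝ),
        (-∑ j ∈ Finset.range m,
            (x : ℂ) ^ (1 - (y : ℂ) * Complex.I) * (Real.log x : ℂ) ^ (m - 1 - j) /
              ((Nat.factorial (m - 1 - j) : ℂ) * ((y : ℂ) * Complex.I - 1) ^ (j + 1))) *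
          (x : ℂ) ^ (-s) =
      1 / (s - 1) *
        (1 / (s - 2 + (y : ℂ) * Complex.I) ^ m - 1 / ((y : ℂ) * Complex.I - 1) ^ m) :=
  stmt_12_general m y s hs
end

section
/- For every positive integer m, every real x ≥ 1, and every real y, one has (1/(m−1)!) · D^{m−1}[ w ↦ x^{w−iy}/(w−iy) ](1) = −∑_{j=0}^{m−1} x^{1−iy} (log x)^{m−1−j} / ((m−1−j)! · (iy−1)^{j+1}), where D^{m−1} denotes the (m−1)-st complex derivative (iterated derivative) and the function w ↦ x^{w−iy}/(w−iy) is evaluated at w = 1. -/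
/-!
After the translation `w ↦ w - iy`, apply the Leibniz rule to `x ^ w * w⁻¹` at `w = 1 - iy`: the
`k`-th derivative of `x ^ w = exp (w log x)` is `(log x) ^ k * x ^ w`, and that of `w⁻¹` is
`(-1) ^ k * k! / w ^ (k + 1)`.
-/

open Finset Complex Nat

theorem iteratedDeriv_const_cpow {a : ℂ} (ha : a ≠ 0) (n : ℕ) :
    iteratedDeriv n (fun w : ℂ => a ^ w) = fun w => log a ^ n * a ^ w := by
  simp only [cpow_def_of_ne_zero ha, iteratedDeriv_cexp_const_mul]

theorem iteratedDeriv_inv {𝕜 : Type*} [NontriviallyNormedField 𝕜] (n : ℕ) (z : 𝕜) :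
    iteratedDeriv n (fun w : 𝕜 => w⁻¹) z = (-1) ^ n * n ! * (z ^ (n + 1))⁻¹ := by
  rw [iteratedDeriv_eq_iterate, iter_deriv_inv,
    show (-1 - n : ℤ) = -((n + 1 : ℕ) : ℤ) by push_cast; ring, zpow_neg, zpow_natCast]

theorem iteratedDeriv_cpow_div_self_div_factorial {a z : ℂ} (ha : a ≠ 0) (hz : z ≠ 0) (n : ℕ) :
    iteratedDeriv n (fun w : ℂ => a ^ w / w) z / n ! =
      -∑ j ∈ range (n + 1), a ^ z * log a ^ (n - j) / ((n - j)! * (-z) ^ (j + 1)) := by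
  have hf : ContDiffAt ℂ n (fun w : ℂ => a ^ w) z := by
    simp only [cpow_def_of_ne_zero ha]
    fun_prop
  have hg : ContDiffAt ℂ n (fun w : ℂ => w⁻¹) z := by fun_prop (disch := assumption)
  change iteratedDeriv n (fun w : ℂ => a ^ w * w⁻¹) z / n ! = _
  rw [iteratedDeriv_fun_mul hf hg, sum_div, ← sum_range_reflect, ← sum_neg_distrib]
  simp only [iteratedDeriv_const_cpow ha, iteratedDeriv_inv]
  refine sum_congr rfl fun j hj => ?_
  have hjn : j ≤ n := Nat.lt_succ_iff.1 (mem_range.1 hj)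
  rw [Nat.add_sub_cancel, Nat.cast_choose ℂ (Nat.sub_le n j), Nat.sub_sub_self hjn, neg_pow z,
    pow_succ (-1 : ℂ)]
  have hn : (n ! : ℂ) ≠ 0 := Nat.cast_ne_zero.2 n.factorial_ne_zero
  have hj : (j ! : ℂ) ≠ 0 := Nat.cast_ne_zero.2 j.factorial_ne_zero
  field_simp
  ring_nf
  simp [pow_mul']

theorem stmt_13 (m : ℕ) (hm : 0 < m) (x y : ℝ) (hx : 1 ≤ x) :
    (1 / (Nat.factorial (m - 1) : ℂ)) *
        iteratedDeriv (m - 1)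
          (fun w : ℂ => (x : ℂ) ^ (w - (y : ℂ) * Complex.I) / (w - (y : ℂ) * Complex.I)) 1 =
      -∑ j ∈ Finset.range m,
          (x : ℂ) ^ (1 - (y : ℂ) * Complex.I) * (Real.log x : ℂ) ^ (m - 1 - j) /
            ((Nat.factorial (m - 1 - j) : ℂ) * ((y : ℂ) * Complex.I - 1) ^ (j + 1)) := by
  obtain ⟨n, rfl⟩ : ∃ n, m = n + 1 := ⟨m - 1, by omega⟩
  have hx0 : 0 < x := zero_lt_one.trans_le hx
  have hz : 1 - (y : ℂ) * I ≠ 0 := fun h => by simpa using congrArg re h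
  rw [Nat.add_sub_cancel, one_div_mul_eq_div,
    iteratedDeriv_comp_sub_const n (fun u : ℂ => (x : ℂ) ^ u / u),
    iteratedDeriv_cpow_div_self_div_factorial (ofReal_ne_zero.2 hx0.ne') hz, ofReal_log hx0.le,
    neg_sub]
end

section
/- Fix δ > 0. Then there exists a constant C > 0 (depending only on δ) such that for all complex s with Re s ≥ δ, |Γ'(s)/Γ(s) − log s| ≤ C / (|Im s| + 2), where Γ is the complex Gamma function, Γ' its derivative, and log the principal branch of the complex logarithm. -/
/-!
For `Re s > 0` the series `F s = ∑ₙ (log (1 + 1/(n+s)) - 1/(n+s))` converges absolutely: since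
`|log (1 + w) - w| ≤ |w|²` when `Re w ≥ 0`, its `n`-th term is at most `2/(n + Re s + |Im s|)²`,
so `|F s| = O(1/(Re s + |Im s|))`. The difference `ψ - log - F` (`ψ = Γ'/Γ`) is holomorphic on the
right half-plane and `1`-periodic, by `ψ (s+1) = ψ s + 1/s`. Along the real axis it tends to `0`,
since `ψ x - log x → 0`: `ψ` is monotone by the log-convexity of `Γ` and `ψ (n+1) = H_n - γ`.
Hence it vanishes on the positive reals, and by the identity theorem on the whole half-plane.
-/

open Complex Filter Topology Set

lemma Complex.inv_re_nonneg {z : ℂ} (hz : 0 ≤ z.re) : 0 ≤ z⁻¹.re := by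
  rw [inv_re]; exact div_nonneg hz (normSq_nonneg z)

lemma Complex.one_add_inv_mem_slitPlane {z : ℂ} (hz : 0 ≤ z.re) : 1 + z⁻¹ ∈ slitPlane :=
  mem_slitPlane_iff.2 <| .inl <| by
    simp only [add_re, one_re]; linarith [inv_re_nonneg hz]

lemma Complex.sq_re_add_abs_im_le (z : ℂ) : (z.re + |z.im|) ^ 2 ≤ 2 * ‖z‖ ^ 2 := by
  rw [Complex.sq_norm, normSq_apply]
  nlinarith [sq_nonneg (z.re - |z.im|), sq_abs z.im]

theorem Complex.norm_log_one_add_sub_self_le_sq {w : ℂ} (hw : 0 ≤ w.re) :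
    ‖log (1 + w) - w‖ ≤ ‖w‖ ^ 2 := by
  let K := {u : ℂ | 0 ≤ u.re} ∩ Metric.closedBall 0 ‖w‖
  have hK : Convex ℝ K := (convex_halfSpace_re_ge 0).inter (convex_closedBall 0 _)
  have hderiv : ∀ u ∈ K, HasDerivWithinAt (fun u => log (1 + u) - u) (-u / (1 + u)) K u := by
    intro u ⟨hu, _⟩
    have hre : 0 < (1 + u).re := by rw [add_re, one_re]; linarith [hu.out]
    have hne : 1 + u ≠ 0 := fun h => by simp [h] at hre
    refine (((hasDerivAt_id u).const_add 1).clog (mem_slitPlane_iff.2 (.inl hre))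
      |>.sub (hasDerivAt_id u)).hasDerivWithinAt.congr_deriv ?_
    simp only [id]
    field_simp
    ring
  have hbound : ∀ u ∈ K, ‖-u / (1 + u)‖ ≤ ‖w‖ := by
    intro u ⟨hu, hball⟩
    have h1 : 1 ≤ ‖1 + u‖ := by
      calc (1 : ℝ) ≤ (1 + u).re := by rw [add_re, one_re]; linarith [hu.out]
        _ ≤ ‖1 + u‖ := re_le_norm _
    calc ‖-u / (1 + u)‖ = ‖u‖ / ‖1 + u‖ := by rw [norm_div, norm_neg]
      _ ≤ ‖u‖ := div_le_self (norm_nonneg _) h1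
      _ ≤ ‖w‖ := by simpa using hball
  have := hK.norm_image_sub_le_of_norm_hasDerivWithin_le hderiv hbound
    (x := 0) (y := w) ⟨le_refl (0 : ℝ), by simp⟩ ⟨hw, by simp⟩
  simpa [sq] using this

lemma one_div_add_sq_le_mul_sub {c : ℝ} (hc : 0 < c) {x : ℝ} (hx : 0 ≤ x) :
    1 / (x + c) ^ 2 ≤ (1 + 1 / c) * (1 / (x + c) - 1 / (x + 1 + c)) := by
  have hxc : 0 < x + c := by linarith
  rw [div_sub_div _ _ hxc.ne' (by linarith), div_le_iff₀ (by positivity)]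
  field_simp
  nlinarith

lemma sum_range_one_div_add_sq_le {c : ℝ} (hc : 0 < c) (N : ℕ) :
    ∑ n ∈ Finset.range N, 1 / ((n : ℝ) + c) ^ 2 ≤ (1 + 1 / c) / c := by
  calc ∑ n ∈ Finset.range N, 1 / ((n : ℝ) + c) ^ 2
      ≤ ∑ n ∈ Finset.range N, (1 + 1 / c) * (1 / ((n : ℝ) + c) - 1 / ((n + 1 : ℕ) + c)) :=
        Finset.sum_le_sum fun n _ => by
          push_cast; exact one_div_add_sq_le_mul_sub hc n.cast_nonneg
    _ = (1 + 1 / c) * (1 / c - 1 / (N + c)) := by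
        rw [← Finset.mul_sum, Finset.sum_range_sub' (fun n : ℕ => 1 / ((n : ℝ) + c))]
        simp
    _ ≤ (1 + 1 / c) * (1 / c) := by gcongr; exact sub_le_self _ (by positivity)
    _ = (1 + 1 / c) / c := mul_one_div _ _

lemma summable_one_div_add_sq {c : ℝ} (hc : 0 < c) :
    Summable fun n : ℕ => 1 / ((n : ℝ) + c) ^ 2 :=
  summable_of_sum_range_le (fun _ => by positivity) (sum_range_one_div_add_sq_le hc)

lemma tsum_one_div_add_sq_le {c : ℝ} (hc : 0 < c) :
    ∑' n : ℕ, 1 / ((n : ℝ) + c) ^ 2 ≤ (1 + 1 / c) / c :=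
  (summable_one_div_add_sq hc).tsum_le_of_sum_range_le (sum_range_one_div_add_sq_le hc)

lemma Complex.ne_neg_natCast_of_re_pos {s : ℂ} (hs : 0 < s.re) (m : ℕ) : s ≠ -m := by
  rintro rfl
  simp only [neg_re, natCast_re, Left.neg_pos_iff] at hs
  linarith [m.cast_nonneg (α := ℝ)]

lemma Complex.log_add_one_eq_log_add_log_one_add_inv {s : ℂ} (hs : 0 < s.re) :
    log (s + 1) = log s + log (1 + s⁻¹) := by
  have hs0 : s ≠ 0 := fun h => by simp [h] at hs
  have hw : 0 < (1 + s⁻¹).re := by rw [add_re, one_re]; linarith [inv_re_nonneg hs.le]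
  rw [show s + 1 = s * (1 + s⁻¹) by field_simp]
  refine log_mul hs0 (fun h => by simp [h] at hw) ?_
  obtain ⟨h1, h2⟩ := abs_lt.1 (abs_arg_lt_pi_div_two_iff.2 (Or.inl hs))
  obtain ⟨h3, h4⟩ := abs_lt.1 (abs_arg_lt_pi_div_two_iff.2 (Or.inl hw))
  constructor <;> linarith [Real.pi_pos]

lemma Complex.differentiableOn_digamma : DifferentiableOn ℂ digamma {s | 0 < s.re} := by
  have hGamma : DifferentiableOn ℂ Gamma {s | 0 < s.re} := fun s hs =>
    (differentiableAt_Gamma s (ne_neg_natCast_of_re_pos hs)).differentiableWithinAt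
  exact (hGamma.deriv (isOpen_lt continuous_const continuous_re)).div hGamma
    fun s hs => Gamma_ne_zero_of_re_pos hs

lemma Complex.deriv_Gamma_ofReal {x : ℝ} (hx : 0 < x) :
    deriv Gamma (x : ℂ) = deriv Real.Gamma x := by
  have hC := (differentiableAt_Gamma (x : ℂ)
    (ne_neg_natCast_of_re_pos (by simpa))).hasDerivAt.comp_ofReal
  have hR := (Real.differentiableOn_Gamma_Ioi.differentiableAt
    (Ioi_mem_nhds hx)).hasDerivAt.ofReal_comp
  simp only [Gamma_ofReal] at hC
  exact hC.unique hR

lemma Complex.digamma_ofReal {x : ℝ} (hx : 0 < x) : digamma x = logDeriv Real.Gamma x := by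
  rw [digamma_def, logDeriv_apply, logDeriv_apply, deriv_Gamma_ofReal hx, Gamma_ofReal, ofReal_div]

namespace Real

lemma logDeriv_Gamma_add_one {x : ℝ} (hx : 0 < x) :
    logDeriv Gamma (x + 1) = logDeriv Gamma x + x⁻¹ := by
  have := digamma_apply_add_one x (ne_neg_natCast_of_re_pos (by simpa))
  rw [← ofReal_one, ← ofReal_add, digamma_ofReal hx, digamma_ofReal (by linarith)] at this
  exact_mod_cast this

lemma logDeriv_Gamma_nat_add_one (n : ℕ) :
    logDeriv Gamma (n + 1) = -eulerMascheroniConstant + harmonic n := by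
  rw [logDeriv_apply, deriv_Gamma_nat, Gamma_nat_eq_factorial,
    mul_div_cancel_left₀ _ (by positivity)]

lemma monotoneOn_logDeriv_Gamma : MonotoneOn (logDeriv Gamma) (Ioi 0) := by
  have hd : ∀ x ∈ Ioi (0 : ℝ), DifferentiableAt ℝ Gamma x := fun x hx =>
    differentiableOn_Gamma_Ioi.differentiableAt (Ioi_mem_nhds hx)
  refine (convexOn_log_Gamma.monotoneOn_deriv fun x hx =>
    (differentiableAt_log (Gamma_pos_of_pos hx).ne').comp x (hd x hx)).congr fun x hx => ?_
  exact deriv.log (hd x hx) (Gamma_pos_of_pos hx).ne'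

lemma abs_logDeriv_Gamma_sub_log_sub_floor_le {x : ℝ} (hx : 0 < x) :
    |logDeriv Gamma x - log x - (logDeriv Gamma (⌊x⌋₊ + 1) - log (⌊x⌋₊ + 1))| ≤ x⁻¹ := by
  have hfloor : (⌊x⌋₊ : ℝ) ≤ x := Nat.floor_le hx.le
  have hfloor' : x ≤ ⌊x⌋₊ + 1 := (Nat.lt_floor_add_one x).le
  have hψ_le : logDeriv Gamma x ≤ logDeriv Gamma (⌊x⌋₊ + 1) :=
    monotoneOn_logDeriv_Gamma hx (by simp only [mem_Ioi]; positivity) hfloor'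
  have hψ_ge : logDeriv Gamma (⌊x⌋₊ + 1) ≤ logDeriv Gamma x + x⁻¹ := by
    rw [← logDeriv_Gamma_add_one hx]
    exact monotoneOn_logDeriv_Gamma (by simp only [mem_Ioi]; positivity)
      (by simp only [mem_Ioi]; linarith) (by linarith)
  have hlog_le : log x ≤ log (⌊x⌋₊ + 1) := log_le_log hx hfloor'
  have hlog_ge : log (⌊x⌋₊ + 1) ≤ log x + x⁻¹ := by
    have := log_le_sub_one_of_pos (div_pos (by positivity : (0 : ℝ) < ⌊x⌋₊ + 1) hx)
    rw [log_div (by positivity) hx.ne'] at this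
    have : (⌊x⌋₊ + 1) / x - 1 ≤ x⁻¹ := by
      rw [div_sub_one hx.ne', inv_eq_one_div]; gcongr; linarith
    linarith
  rw [abs_le]; constructor <;> linarith

lemma tendsto_logDeriv_Gamma_sub_log_atTop :
    Tendsto (fun x => logDeriv Gamma x - log x) atTop (𝓝 0) := by
  have hnat : Tendsto (fun n : ℕ => logDeriv Gamma (n + 1) - log (n + 1)) atTop (𝓝 0) := by
    simpa [logDeriv_Gamma_nat_add_one, add_sub_assoc] using
      tendsto_harmonic_sub_log_add_one.const_add (-eulerMascheroniConstant)
  have herr : Tendsto (fun x : ℝ => logDeriv Gamma x - log x -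
      (logDeriv Gamma (⌊x⌋₊ + 1) - log (⌊x⌋₊ + 1))) atTop (𝓝 0) :=
    squeeze_zero_norm' ((eventually_gt_atTop 0).mono fun x hx =>
      abs_logDeriv_Gamma_sub_log_sub_floor_le hx) tendsto_inv_atTop_zero
  simpa using (hnat.comp tendsto_nat_floor_atTop).add herr

end Real

namespace DigammaSubLog

noncomputable def term (s : ℂ) (n : ℕ) : ℂ := log (1 + (n + s)⁻¹) - (n + s)⁻¹

noncomputable def series (s : ℂ) : ℂ := ∑' n, term s n

lemma norm_term_le {s : ℂ} (hs : 0 < s.re) (n : ℕ) :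
    ‖term s n‖ ≤ 2 * (1 / (n + (s.re + |s.im|)) ^ 2) := by
  have hre : 0 < ((n : ℂ) + s).re := by
    rw [add_re, natCast_re]; linarith [n.cast_nonneg (α := ℝ)]
  have hpos : 0 < (n : ℝ) + (s.re + |s.im|) := by
    linarith [n.cast_nonneg (α := ℝ), abs_nonneg s.im]
  have hsq := sq_re_add_abs_im_le ((n : ℂ) + s)
  simp only [add_re, natCast_re, add_im, natCast_im, zero_add] at hsq
  calc ‖term s n‖ ≤ ‖((n : ℂ) + s)⁻¹‖ ^ 2 :=
        norm_log_one_add_sub_self_le_sq (inv_re_nonneg hre.le)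
    _ = 1 / ‖(n : ℂ) + s‖ ^ 2 := by rw [norm_inv, inv_pow, one_div]
    _ ≤ 2 * (1 / (n + (s.re + |s.im|)) ^ 2) := by
        rw [mul_one_div, div_le_div_iff₀ (by nlinarith [pow_pos hpos 2]) (by positivity)]
        linarith

lemma summable_term {s : ℂ} (hs : 0 < s.re) : Summable (term s) := by
  have hc : 0 < s.re + |s.im| := by linarith [abs_nonneg s.im]
  exact .of_norm_bounded ((summable_one_div_add_sq hc).mul_left 2) (norm_term_le hs)

lemma norm_series_le {s : ℂ} (hs : 0 < s.re) :
    ‖series s‖ ≤ 2 * (1 + 1 / (s.re + |s.im|)) / (s.re + |s.im|) := by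
  have hc : 0 < s.re + |s.im| := by linarith [abs_nonneg s.im]
  calc ‖series s‖ ≤ ∑' n : ℕ, 2 * (1 / ((n : ℝ) + (s.re + |s.im|)) ^ 2) :=
        tsum_of_norm_bounded ((summable_one_div_add_sq hc).mul_left 2).hasSum (norm_term_le hs)
    _ ≤ 2 * (1 + 1 / (s.re + |s.im|)) / (s.re + |s.im|) := by
        rw [tsum_mul_left, mul_div_assoc]
        exact mul_le_mul_of_nonneg_left (tsum_one_div_add_sq_le hc) zero_le_two

lemma differentiableOn_term (n : ℕ) : DifferentiableOn ℂ (term · n) {s | 0 < s.re} := by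
  intro s hs
  have hre : 0 < ((n : ℂ) + s).re := by
    rw [add_re, natCast_re]; linarith [n.cast_nonneg (α := ℝ), hs.out]
  have hinv : DifferentiableAt ℂ (fun s : ℂ => ((n : ℂ) + s)⁻¹) s :=
    (differentiableAt_id.const_add _).inv fun h => by simp [h] at hre
  exact ((hinv.const_add 1).clog (one_add_inv_mem_slitPlane hre.le)
    |>.sub hinv).differentiableWithinAt

lemma differentiableOn_series : DifferentiableOn ℂ series {s | 0 < s.re} := by
  have hopen (ε : ℝ) : IsOpen {s : ℂ | ε < s.re} := isOpen_lt continuous_const continuous_re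
  have hε {ε : ℝ} (hε : 0 < ε) : DifferentiableOn ℂ series {s | ε < s.re} := by
    refine differentiableOn_tsum_of_summable_norm ((summable_one_div_add_sq hε).mul_left 2)
      (fun n => (differentiableOn_term n).mono fun s hs => hε.trans hs.out) (hopen ε)
      fun n s hs => ?_
    refine (norm_term_le (hε.trans hs) n).trans ?_
    have : (0 : ℝ) < n + ε := by positivity
    gcongr
    linarith [abs_nonneg s.im, hs.out]
  intro s hs
  exact ((hε (half_pos hs)).differentiableAt
    ((hopen _).mem_nhds (half_lt_self hs.out))).differentiableWithinAt

lemma series_eq_term_zero_add {s : ℂ} (hs : 0 < s.re) :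
    series s = term s 0 + series (s + 1) := by
  rw [series, (summable_term hs).tsum_eq_zero_add, series]
  congr 2 with n
  simp only [term]
  push_cast
  ring_nf

noncomputable def defect (s : ℂ) : ℂ := digamma s - log s - series s

lemma defect_add_one {s : ℂ} (hs : 0 < s.re) : defect (s + 1) = defect s := by
  rw [defect, defect, digamma_apply_add_one s (ne_neg_natCast_of_re_pos hs),
    log_add_one_eq_log_add_log_one_add_inv hs, series_eq_term_zero_add hs, term]
  simp only [Nat.cast_zero, zero_add]
  ring

lemma defect_add_nat {s : ℂ} (hs : 0 < s.re) (n : ℕ) : defect (s + n) = defect s := by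
  induction n with
  | zero => simp
  | succ n ih =>
    have hre : 0 < (s + n).re := by rw [add_re, natCast_re]; positivity
    rw [Nat.cast_succ, ← add_assoc, defect_add_one hre, ih]

lemma tendsto_defect_ofReal_atTop : Tendsto (fun x : ℝ => defect x) atTop (𝓝 0) := by
  have hseries : Tendsto (fun x : ℝ => series x) atTop (𝓝 0) := by
    have hbound : Tendsto (fun x : ℝ => 2 * (1 + x⁻¹) * x⁻¹) atTop (𝓝 0) := by
      simpa using (((tendsto_inv_atTop_zero (𝕜 := ℝ)).const_add 1).const_mul 2).mul
        tendsto_inv_atTop_zero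
    refine squeeze_zero_norm' ((eventually_gt_atTop 0).mono fun x hx => ?_) hbound
    simpa [div_eq_mul_inv] using norm_series_le (s := x) (by simpa)
  have hψ := (continuous_ofReal.tendsto 0).comp Real.tendsto_logDeriv_Gamma_sub_log_atTop
  refine (hψ.sub hseries).congr' ((eventually_gt_atTop 0).mono fun x hx => ?_) |>.trans (by simp)
  simp [defect, digamma_ofReal hx, ofReal_log hx.le]

lemma defect_ofReal_eq_zero {x : ℝ} (hx : 0 < x) : defect x = 0 := by
  have hshift : (fun n : ℕ => defect ((x + n : ℝ) : ℂ)) = fun _ => defect x :=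
    funext fun n => by push_cast; exact defect_add_nat (by simpa) n
  have := tendsto_defect_ofReal_atTop.comp
    (tendsto_atTop_add_const_left atTop x tendsto_natCast_atTop_atTop)
  rw [Function.comp_def, hshift] at this
  exact tendsto_nhds_unique tendsto_const_nhds this

lemma eqOn_defect_zero : EqOn defect 0 {s | 0 < s.re} := by
  have hlog : DifferentiableOn ℂ log {s | 0 < s.re} := fun s hs =>
    (differentiableAt_log (mem_slitPlane_iff.2 (.inl hs))).differentiableWithinAt
  have hanalytic : AnalyticOnNhd ℂ defect {s | 0 < s.re} :=
    ((differentiableOn_digamma.sub hlog).sub differentiableOn_series).analyticOnNhd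
      (isOpen_lt continuous_const continuous_re)
  refine hanalytic.eqOn_zero_of_preconnected_of_frequently_eq_zero
    (convex_halfSpace_re_gt 0).isPreconnected (z₀ := 1) (by simp) ?_
  have hreal : ∃ᶠ x : ℝ in 𝓝[≠] 1, defect x = 0 :=
    (((lt_mem_nhds one_pos).filter_mono nhdsWithin_le_nhds).mono
      fun x hx => defect_ofReal_eq_zero hx).frequently
  have hofReal : Tendsto ((↑) : ℝ → ℂ) (𝓝[≠] 1) (𝓝[≠] 1) := by
    simpa using continuous_ofReal.continuousWithinAt.tendsto_nhdsWithin
      (x := (1 : ℝ)) (t := {(1 : ℂ)}ᶜ) fun _ _ ↦ by simp_all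
  exact hofReal.frequently hreal

end DigammaSubLog

theorem stmt_16 (δ : ℝ) (hδ : 0 < δ) :
    ∃ C > 0, ∀ s : ℂ, δ ≤ s.re →
      ‖deriv Complex.Gamma s / Complex.Gamma s - Complex.log s‖ ≤
        C / (|s.im| + 2) := by
  refine ⟨2 * (1 + 1 / δ) * ((δ + 2) / δ), by positivity, fun s hs => ?_⟩
  have hs0 : 0 < s.re := hδ.trans_le hs
  have hseries : deriv Gamma s / Gamma s - log s = DigammaSubLog.series s := by
    simpa [DigammaSubLog.defect, digamma_def, logDeriv_apply, sub_eq_zero] using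
      DigammaSubLog.eqOn_defect_zero hs0
  have hc : δ + |s.im| ≤ s.re + |s.im| := by linarith
  have hinv : 1 / (s.re + |s.im|) ≤ (δ + 2) / δ / (|s.im| + 2) := by
    rw [div_div, div_le_div_iff₀ (by positivity) (by positivity)]
    nlinarith [abs_nonneg s.im]
  rw [hseries]
  calc ‖DigammaSubLog.series s‖ ≤ 2 * (1 + 1 / (s.re + |s.im|)) * (1 / (s.re + |s.im|)) :=
        (DigammaSubLog.norm_series_le hs0).trans_eq (mul_one_div _ _).symm
    _ ≤ 2 * (1 + 1 / δ) * ((δ + 2) / δ / (|s.im| + 2)) := by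
        gcongr
        linarith [abs_nonneg s.im]
    _ = 2 * (1 + 1 / δ) * ((δ + 2) / δ) / (|s.im| + 2) := by ring
end

section
/- Fix a positive integer k. For every complex s with Re s > 1, the Dirichlet series ∑_{n=1}^∞ Λ_k(n)/n^s converges and equals (−1)^k · ζ^{(k)}(s)/ζ(s), where ζ^{(k)} denotes the k-th derivative of the Riemann zeta function. -/
/-!
Write `Λ_k = μ ⍟ log^k` as a Dirichlet convolution. Both factors have absolutely convergent
L-series for `Re s > 1`, so the L-series of `Λ_k` is the product `L(μ, s) · L(log^k, s)`.
Here `L(μ, s) = 1 / ζ(s)`, and differentiating `ζ(s) = ∑ n⁻ˢ` termwise `k` times gives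
`L(log^k, s) = (-1)^k ζ^{(k)}(s)`.
-/

open Finset

/-- The generalized von Mangoldt function `Λ_k(n) = ∑_{d ∣ n} μ(d) (log (n/d))^k`. -/
noncomputable def genVonMangoldt (k : ℕ) (n : ℕ) : ℝ :=
  ∑ d ∈ n.divisors, (ArithmeticFunction.moebius d : ℝ) * (Real.log ((n / d : ℕ) : ℝ)) ^ k

open ArithmeticFunction LSeries
open scoped LSeries.notation ArithmeticFunction.Moebius

lemma LSeries.logMul_iterate_one (k n : ℕ) :
    (logMul^[k] (1 : ℕ → ℂ)) n = Complex.log n ^ k := by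
  induction k with
  | zero => simp
  | succ m ih =>
    rw [Function.iterate_succ', Function.comp_apply, logMul, ih, pow_succ, mul_comm]

lemma LSeries_moebius_eq_inv_riemannZeta {s : ℂ} (hs : 1 < s.re) :
    L ↗μ s = (riemannZeta s)⁻¹ := by
  rw [← LSeries_one_eq_riemannZeta hs]
  exact eq_inv_of_mul_eq_one_right (LSeries_one_mul_Lseries_moebius hs)

lemma LSeries_logPow_eq_iteratedDeriv_riemannZeta (k : ℕ) {s : ℂ} (hs : 1 < s.re) :
    L (logMul^[k] 1) s = (-1) ^ k * iteratedDeriv k riemannZeta s := by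
  have hs' : abscissaOfAbsConv 1 < s.re := by
    rw [abscissaOfAbsConv_one]; exact_mod_cast hs
  have hzeta : riemannZeta =ᶠ[nhds s] L 1 := by
    filter_upwards [(isOpen_lt continuous_const Complex.continuous_re).mem_nhds hs] with z hz
    exact (LSeries_one_eq_riemannZeta hz).symm
  rw [hzeta.iteratedDeriv_eq k, LSeries_iteratedDeriv k hs', ← mul_assoc, ← pow_add,
    Even.neg_one_pow ⟨k, rfl⟩, one_mul]

lemma genVonMangoldt_eq_moebius_convolution_logPow (k n : ℕ) :
    (genVonMangoldt k n : ℂ) = (↗μ ⍟ logMul^[k] 1) n := by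
  rw [convolution_def]
  dsimp only
  rw [Nat.sum_divisorsAntidiagonal (f := fun a b => (μ a : ℂ) * logMul^[k] 1 b),
    genVonMangoldt]
  push_cast
  simp only [logMul_iterate_one]

theorem stmt_19_general (k : ℕ) (s : ℂ) (hs : 1 < s.re) :
    HasSum (fun n : ℕ => (genVonMangoldt k n : ℂ) / (n : ℂ) ^ s)
      ((-1) ^ k * (iteratedDeriv k riemannZeta s / riemannZeta s)) := by
  have hμ : LSeriesSummable ↗μ s := LSeriesSummable_moebius_iff.mpr hs
  have hlog : LSeriesSummable (logMul^[k] 1) s :=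
    LSeriesSummable_of_abscissaOfAbsConv_lt_re <| by
      rw [absicssaOfAbsConv_logPowMul, abscissaOfAbsConv_one]; exact_mod_cast hs
  have hconv := hμ.LSeriesHasSum.convolution hlog.LSeriesHasSum
  rw [LSeries_moebius_eq_inv_riemannZeta hs,
    LSeries_logPow_eq_iteratedDeriv_riemannZeta k hs, LSeriesHasSum] at hconv
  convert hconv using 1
  · ext n
    rcases eq_or_ne n 0 with rfl | hn
    · simp [genVonMangoldt]
    · rw [term_of_ne_zero hn, genVonMangoldt_eq_moebius_convolution_logPow]
  · ring

theorem stmt_19 (k : ℕ) (hk : 0 < k) (s : ℂ) (hs : 1 < s.re) :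
    HasSum (fun n : ℕ => (genVonMangoldt k n : ℂ) / (n : ℂ) ^ s)
      ((-1) ^ k * (iteratedDeriv k riemannZeta s / riemannZeta s)) :=
  stmt_19_general k s hs
end
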